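/- arXiv:2205.14894 — 3 statements merged into one kernel-verified Lean document; each statement's English description precedes it below -/
import Mathlib

section
/- For all real x > 2, 1 - 2/x⁴ > (2 - 2^{1/x}) · 2^{1/x}. -/
/-! Write `t = 2 ^ (1 / x)`, so that `(2 - t) * t = 1 - (t - 1) ^ 2` and the claim is
`2 / x ^ 4 < (t - 1) ^ 2`. The quadratic lower bound `1 + u + u ^ 2 / 2 ≤ exp u` at
`u = log 2 / x` gives `(t - 1) x ^ 2 ≥ x log 2 + (log 2) ^ 2 / 2 > 1.626`, and `1.626 ^ 2 > 2`. -/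

open Real

lemma one_add_mul_log_add_sq_div_two_le_rpow {a y : ℝ} (ha : 1 ≤ a) (hy : 0 ≤ y) :
    1 + y * log a + (y * log a) ^ 2 / 2 ≤ a ^ y := by
  rw [rpow_def_of_pos (by linarith), mul_comm (log a)]
  exact quadratic_le_exp_of_nonneg (mul_nonneg hy (log_nonneg ha))

lemma two_div_pow_four_lt_sq_two_rpow_inv_sub_one {x : ℝ} (hx : 2 < x) :
    2 / x ^ 4 < ((2 : ℝ) ^ (1 / x) - 1) ^ 2 := by
  have hx0 : 0 < x := by linarith
  have hlog := log_two_gt_d9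
  have hquad := one_add_mul_log_add_sq_div_two_le_rpow one_le_two (one_div_nonneg.2 hx0.le)
  have hscaled : (1.626 : ℝ) < ((2 : ℝ) ^ (1 / x) - 1) * x ^ 2 :=
    calc (1.626 : ℝ) < log 2 * x + log 2 ^ 2 / 2 := by nlinarith
      _ = (1 / x * log 2 + (1 / x * log 2) ^ 2 / 2) * x ^ 2 := by field_simp
      _ ≤ ((2 : ℝ) ^ (1 / x) - 1) * x ^ 2 := by gcongr; linarith
  rw [div_lt_iff₀ (by positivity)]
  calc (2 : ℝ) < 1.626 ^ 2 := by norm_num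
    _ < (((2 : ℝ) ^ (1 / x) - 1) * x ^ 2) ^ 2 := by gcongr
    _ = ((2 : ℝ) ^ (1 / x) - 1) ^ 2 * x ^ 4 := by ring

theorem ineq_one_sub_two_div_pow_four (x : ℝ) (hx : 2 < x) :
    1 - 2 / x ^ 4 > (2 - (2 : ℝ) ^ (1 / x)) * (2 : ℝ) ^ (1 / x) := by
  have hsq := two_div_pow_four_lt_sq_two_rpow_inv_sub_one hx
  have hprod : (2 - (2 : ℝ) ^ (1 / x)) * (2 : ℝ) ^ (1 / x) = 1 - ((2 : ℝ) ^ (1 / x) - 1) ^ 2 := by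
    ring
  rw [hprod]
  linarith
end

section
/- For all real x > 0, (1 - 2^{-1/x}) · 2^{2/x} > 1/x². -/
/-!
Put `u = log 2 / x > 0`. The left side is `eᵘ (eᵘ - 1) ≥ u eᵘ` and the right side is
`u² / (log 2)²`, so it suffices that `eᵘ > u / (log 2)²`. This follows from `e u ≤ eᵘ`
together with the numerical fact `e (log 2)² > 1`.
-/

open Real

lemma one_lt_exp_one_mul_log_two_sq : 1 < exp 1 * log 2 ^ 2 := by
  have hlog := log_two_gt_d9
  have he := exp_one_gt_d9
  nlinarith

lemma div_log_two_sq_lt_exp {u : ℝ} (hu : 0 < u) : u / log 2 ^ 2 < exp u := by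
  have hlog : 0 < log 2 ^ 2 := by positivity
  rw [div_lt_iff₀ hlog]
  calc u = u * 1 := (mul_one u).symm
    _ < u * (exp 1 * log 2 ^ 2) := mul_lt_mul_of_pos_left one_lt_exp_one_mul_log_two_sq hu
    _ = exp 1 * u * log 2 ^ 2 := by ring
    _ ≤ exp u * log 2 ^ 2 := by gcongr; exact exp_one_mul_le_exp

lemma one_sub_exp_neg_mul_exp_two_mul (u : ℝ) :
    (1 - exp (-u)) * exp (2 * u) = exp u * (exp u - 1) := by
  rw [two_mul, exp_add, exp_neg]
  field_simp

lemma mul_exp_le_exp_mul_exp_sub_one (u : ℝ) :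
    u * exp u ≤ exp u * (exp u - 1) := by
  rw [mul_comm]
  gcongr
  linarith [add_one_le_exp u]

theorem ineq_gamma_lower (x : ℝ) (hx : 0 < x) :
    (1 - (2 : ℝ) ^ (-1 / x)) * (2 : ℝ) ^ (2 / x) > 1 / x ^ 2 := by
  set u := log 2 / x with hu_def
  have hu : 0 < u := div_pos (log_pos one_lt_two) hx
  have hneg : (2 : ℝ) ^ (-1 / x) = exp (-u) := by
    rw [rpow_def_of_pos two_pos, hu_def]; ring_nf
  have htwo : (2 : ℝ) ^ (2 / x) = exp (2 * u) := by
    rw [rpow_def_of_pos two_pos, hu_def]; ring_nf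
  have hrhs : 1 / x ^ 2 = u * (u / log 2 ^ 2) := by
    rw [hu_def]; field_simp
  rw [hneg, htwo, hrhs, one_sub_exp_neg_mul_exp_two_mul, gt_iff_lt]
  calc u * (u / log 2 ^ 2) < u * exp u := mul_lt_mul_of_pos_left (div_log_two_sq_lt_exp hu) hu
    _ ≤ exp u * (exp u - 1) := mul_exp_le_exp_mul_exp_sub_one u
end

section
/- Let I be a finite index set and let c : I → List Bool be an injective map such that no c(i) is a prefix of c(j) for i ≠ j. Then Σ_{i∈I} 2^{-(length of c(i))} ≤ 1. -/
theorem kraft_inequality_prefix_free {I : Type*} [Fintype I] (c : I → List Bool)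
    (hinj : Function.Injective c)
    (hpf : ∀ i j : I, i ≠ j → ¬ (c i <+: c j)) :
    ∑ i : I, ((1 : ℝ) / 2) ^ (c i).length ≤ 1 := by
  classical
  set L := Finset.univ.sup (fun i : I => (c i).length) with hLdef
  have hL : ∀ i : I, (c i).length ≤ L := fun i => Finset.le_sup (f := fun i : I => (c i).length) (Finset.mem_univ i)
  set S : I → Finset (Fin L → Bool) := fun i =>
    Finset.univ.filter (fun w => ∀ k : ℕ, (h : k < (c i).length) →
      w ⟨k, lt_of_lt_of_le h (hL i)⟩ = (c i).get ⟨k, h⟩) with hS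
  have hmem : ∀ i (w : Fin L → Bool), w ∈ S i ↔ ∀ k : ℕ, (h : k < (c i).length) →
      w ⟨k, lt_of_lt_of_le h (hL i)⟩ = (c i).get ⟨k, h⟩ := by
    intro i w
    simp [hS]
  have hcard : ∀ i, (S i).card = 2 ^ (L - (c i).length) := by
    intro i
    have : (S i).card = (Finset.univ : Finset (Fin (L - (c i).length) → Bool)).card := by
      apply Finset.card_bij'
        (i := fun w _ => fun k : Fin (L - (c i).length) => w ⟨(c i).length + k, by omega⟩)
        (j := fun v _ => fun k : Fin L => if h : (k : ℕ) < (c i).length then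
          (c i).get ⟨k, h⟩ else v ⟨(k : ℕ) - (c i).length, by omega⟩)
      · intro w hw
        funext k
        rw [hmem] at hw
        rcases k with ⟨k, hk⟩
        by_cases h : k < (c i).length
        · simp only [dif_pos h]
          exact (hw k h).symm
        · simp only [dif_neg h]
          congr 1
          ext
          simp
          omega
      · intro v hv
        funext k
        simp only [dif_neg (by omega : ¬ ((c i).length + (k : ℕ) < (c i).length))]
        congr 1
        ext
        simp
      · intro w hw
        exact Finset.mem_univ _
      · intro v hv
        rw [hmem]
        intro k h
        simp [dif_pos h]
    rw [this]
    simp [Finset.card_univ]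
  have hdisj : ((Finset.univ : Finset I) : Set I).PairwiseDisjoint S := by
    intro i _ j _ hij
    simp only [Function.onFun]
    rw [Finset.disjoint_left]
    intro w hwi hwj
    rw [hmem] at hwi hwj
    -- one of c i, c j is a prefix of the other
    have key : ∀ a b : I, a ≠ b → (c a).length ≤ (c b).length →
        (∀ k : ℕ, (h : k < (c a).length) → w ⟨k, lt_of_lt_of_le h (hL a)⟩ = (c a).get ⟨k, h⟩) →
        (∀ k : ℕ, (h : k < (c b).length) → w ⟨k, lt_of_lt_of_le h (hL b)⟩ = (c b).get ⟨k, h⟩) →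
        False := by
      intro a b hab hlen ha hb
      apply hpf a b hab
      rw [List.prefix_iff_eq_take]
      apply List.ext_get
      · simp [hlen]
      · intro k h1 h2
        have hk : k < (c a).length := h1
        have e1 := ha k hk
        have e2 := hb k (lt_of_lt_of_le hk hlen)
        simp only [List.get_eq_getElem] at e1 e2 ⊢
        rw [List.getElem_take, ← e1, ← e2]
    rcases le_total (c i).length (c j).length with h | h
    · exact key i j hij h hwi hwj
    · exact key j i (Ne.symm hij) h hwj hwi
  have hsum : ∑ i : I, (S i).card ≤ 2 ^ L := by
    rw [← Finset.card_biUnion (fun i _ => fun j _ hij => hdisj (Finset.mem_univ i) (Finset.mem_univ j) hij)]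
    calc (Finset.univ.biUnion S).card ≤ (Finset.univ : Finset (Fin L → Bool)).card :=
          Finset.card_le_card (Finset.subset_univ _)
      _ = 2 ^ L := by simp [Finset.card_univ]
  -- now real arithmetic
  have h2L : (0 : ℝ) < 2 ^ L := by positivity
  have key : ∀ i : I, ((1 : ℝ) / 2) ^ (c i).length = (2 ^ (L - (c i).length) : ℕ) / 2 ^ L := by
    intro i
    have hn := hL i
    rw [div_pow, one_pow]
    push_cast
    rw [div_eq_div_iff (by positivity) (by positivity)]
    rw [one_mul, ← pow_add]
    congr 1
    omega
  calc ∑ i : I, ((1 : ℝ) / 2) ^ (c i).length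
      = ∑ i : I, ((2 ^ (L - (c i).length) : ℕ) : ℝ) / 2 ^ L := by
        exact Finset.sum_congr rfl fun i _ => key i
    _ = (∑ i : I, ((2 ^ (L - (c i).length) : ℕ) : ℝ)) / 2 ^ L := by
        rw [Finset.sum_div]
    _ ≤ 1 := by
        rw [div_le_one h2L]
        calc (∑ i : I, ((2 ^ (L - (c i).length) : ℕ) : ℝ))
            = ((∑ i : I, 2 ^ (L - (c i).length) : ℕ) : ℝ) := by push_cast; ring
          _ ≤ ((2 ^ L : ℕ) : ℝ) := by
              have := hsum
              simp only [hcard] at this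
              exact_mod_cast this
          _ = (2 ^ L : ℝ) := by push_cast; ring
end
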